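/- Let P be a poset with least element 0 which is Z-directed, and let Z be a lower complete sublattice of P which is P-central, P-modular and Z-modular. If p ∈ P is ≾_Z-finite, then the maps q ↦ c_Z(q) and z ↦ p∧z (the infimum in P of p and z, which exists) are mutually inverse order isomorphisms between the interval [0,p] in P and the set [0,c_Z(p)] ∩ Z = {z ∈ Z : z ≤ c_Z(p)} with the order inherited from P. -/

import Mathlib

/-!
Given `q ≤ p`, centrality splits `p` as `q₁ ∨ r` with `q₁ ≤ c q` and `r` below an element of `Z`
disjoint from `c q`; then `q ∨ r` exists, lies below `p` and has the same `Z`-upper bounds as `p`,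
so finiteness forces `p = q ∨ r`, and `P`-modularity yields `p ∧ c q = q`.  Conversely, for
`z ≤ c p` in `Z`, splitting `p` along `z` gives `p = (p ∧ z) ∨ r` with `r ≤ z'`, `z ∧ z' = 0`;
the `Z`-join of `c (p ∧ z)` and `z'` lies above `p`, hence above `z`, and `Z`-modularity yields
`c (p ∧ z) = z`.
-/

/-- `S` is `Z`-disjoint: there is `f : S → Z` with `p ≤ f p` and `f p ∧ f q = 0`
for distinct `p, q ∈ S`. -/
def ZDisjoint {β : Type*} [PartialOrder β] [OrderBot β] (Z S : Set β) : Prop :=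
  ∃ f : β → β, (∀ p ∈ S, f p ∈ Z ∧ p ≤ f p) ∧
    ∀ p ∈ S, ∀ q ∈ S, p ≠ q → Disjoint (f p) (f q)

/-- `I` is `Z`-complete: every `Z`-disjoint `S ⊆ I` has a supremum lying in `I`, and
whenever `{p, q}` is `Z`-disjoint with supremum in `I`, both `p` and `q` lie in `I`. -/
def ZComplete {β : Type*} [PartialOrder β] [OrderBot β] (Z I : Set β) : Prop :=
  (∀ S ⊆ I, ZDisjoint Z S → ∃ s, IsLUB S s ∧ s ∈ I) ∧
  (∀ p q s, ZDisjoint Z {p, q} → IsLUB {p, q} s → s ∈ I → p ∈ I ∧ q ∈ I)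

/-- `Z` is `S`-central: for every `p ∈ S` and `y ∈ Z` there is `z ∈ Z` with `y ∧ z = 0`
and `p` the supremum of some `q ≤ y` and `r ≤ z`. -/
def SCentral {β : Type*} [PartialOrder β] [OrderBot β] (Z S : Set β) : Prop :=
  ∀ p ∈ S, ∀ y ∈ Z, ∃ z ∈ Z, Disjoint y z ∧ ∃ q r, q ≤ y ∧ r ≤ z ∧ IsLUB {q, r} p
/-- `Z` is `P`-modular: disjoint pairs in `Z` are modular pairs. -/
def PModular {β : Type*} [PartialOrder β] [OrderBot β] (Z : Set β) : Prop :=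
  ∀ y ∈ Z, ∀ z ∈ Z, Disjoint y z →
    ∀ p q s, p ≤ y → q ≤ z → IsLUB {p, q} s → IsGLB {z, s} q
/-- `Z` is `Z`-modular: whenever `y, z ∈ Z` with `y ∧ z = 0`, `p, q ∈ Z` with `p ≤ y`,
`q ≤ z` and `p, q` have a least upper bound `s` within the subposet `Z`, then `q` is the
greatest lower bound within `Z` of `z` and `s`. -/
def ZModular {β : Type*} [PartialOrder β] [OrderBot β] (Z : Set β) : Prop :=
  ∀ y ∈ Z, ∀ z ∈ Z, Disjoint y z → ∀ p ∈ Z, ∀ q ∈ Z, p ≤ y → q ≤ z →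
    ∀ s ∈ Z, (p ≤ s ∧ q ≤ s ∧ ∀ w ∈ Z, p ≤ w → q ≤ w → s ≤ w) →
      (q ≤ s ∧ ∀ w ∈ Z, w ≤ z → w ≤ s → w ≤ q)

section ZCover

variable {α : Type*} [PartialOrder α] {Z : Set α} {c : α → α}

theorem mem_upperBounds_pair {a b x : α} : x ∈ upperBounds {a, b} ↔ a ≤ x ∧ b ≤ x := by simp

theorem mem_lowerBounds_pair {a b x : α} : x ∈ lowerBounds {a, b} ↔ x ≤ a ∧ x ≤ b := by simp

def IsCoverMap (Z : Set α) (c : α → α) : Prop :=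
  ∀ p, c p ∈ Z ∧ IsGLB {z | z ∈ Z ∧ p ≤ z} (c p)

def ZFinite (Z : Set α) (p : α) : Prop :=
  ∀ q, q ≤ p → (∀ z ∈ Z, q ≤ z → p ≤ z) → p = q

namespace IsCoverMap

theorem mem (hc : IsCoverMap Z c) (p : α) : c p ∈ Z := (hc p).1

theorem le_cover (hc : IsCoverMap Z c) (p : α) : p ≤ c p := (hc p).2.2 fun _ hz => hz.2

theorem cover_le (hc : IsCoverMap Z c) {p z : α} (hz : z ∈ Z) (hpz : p ≤ z) : c p ≤ z :=
  (hc p).2.1 ⟨hz, hpz⟩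

theorem monotone (hc : IsCoverMap Z c) : Monotone c := fun _ q hpq =>
  hc.cover_le (hc.mem q) (hpq.trans (hc.le_cover q))

theorem isZJoin_cover_of_isLUB (hc : IsCoverMap Z c) {q y j : α} (hj : IsLUB {q, y} j) :
    y ≤ c j ∧ c q ≤ c j ∧ ∀ w ∈ Z, y ≤ w → c q ≤ w → c j ≤ w :=
  ⟨(hj.1 (by simp)).trans (hc.le_cover j), hc.monotone (hj.1 (by simp)),
    fun w hw hyw hqw => hc.cover_le hw <|
      hj.2 (mem_upperBounds_pair.2 ⟨(hc.le_cover q).trans hqw, hyw⟩)⟩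

end IsCoverMap

variable [OrderBot α]

def ZDirected (Z : Set α) : Prop :=
  ∀ p q : α, ZDisjoint Z {p, q} → ∃ s, IsLUB {p, q} s

theorem zDisjoint_pair {p q y z : α} (hy : y ∈ Z) (hz : z ∈ Z) (hyz : Disjoint y z)
    (hp : p ≤ y) (hq : q ≤ z) : ZDisjoint Z {p, q} := by
  classical
  refine ⟨fun x => if x = p then y else z, ?_, ?_⟩
  · rintro x (rfl | rfl)
    · simp [hy, hp]
    · by_cases h : x = p
      · subst h; simp [hy, hp]
      · simp [h, hz, hq]
  · rintro a (rfl | rfl) b (rfl | rfl) hab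
    · exact absurd rfl hab
    · simp [Ne.symm hab, hyz]
    · simp [hab, hyz.symm]
    · exact absurd rfl hab

theorem PModular.isGLB_pair (hpm : PModular Z) {y z q r s : α} (hy : y ∈ Z) (hz : z ∈ Z)
    (hyz : Disjoint y z) (hq : q ≤ y) (hr : r ≤ z) (hs : IsLUB {q, r} s) : IsGLB {s, y} q := by
  rw [Set.pair_comm] at hs ⊢
  exact hpm z hz y hy hyz.symm r q s hr hq hs

theorem ZModular.le_of_le_zJoin (hzm : ZModular Z) {y z a s : α} (hy : y ∈ Z) (hz : z ∈ Z)
    (hyz : Disjoint y z) (ha : a ∈ Z) (haz : a ≤ z) (hs : s ∈ Z)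
    (hjoin : y ≤ s ∧ a ≤ s ∧ ∀ w ∈ Z, y ≤ w → a ≤ w → s ≤ w) (hzs : z ≤ s) : z ≤ a :=
  (hzm y hy z hz hyz y hy a ha le_rfl haz s hs hjoin).2 z hz le_rfl hzs

theorem exists_isGLB_pair_of_sCentral (hcen : SCentral Z Set.univ) (hpm : PModular Z) (p : α)
    {y : α} (hy : y ∈ Z) :
    ∃ z ∈ Z, Disjoint y z ∧ ∃ q r, r ≤ z ∧ IsLUB {q, r} p ∧ IsGLB {p, y} q := by
  obtain ⟨z, hz, hyz, q, r, hq, hr, hp⟩ := hcen p trivial y hy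
  exact ⟨z, hz, hyz, q, r, hr, hp, hpm.isGLB_pair hy hz hyz hq hr hp⟩

theorem cover_eq_of_isGLB_pair (hc : IsCoverMap Z c) (hdir : ZDirected Z)
    (hcen : SCentral Z Set.univ) (hpm : PModular Z) (hzm : ZModular Z) {p z q : α} (hz : z ∈ Z)
    (hzp : z ≤ c p) (hq : IsGLB {p, z} q) : c q = z := by
  obtain ⟨z', hz', hzz', q₀, r, hrz', hp, hq₀⟩ := exists_isGLB_pair_of_sCentral hcen hpm p hz
  obtain rfl := hq.unique hq₀
  have hqz : q ≤ z := hq.1 (by simp)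
  obtain ⟨j, hj⟩ := hdir q z' (zDisjoint_pair hz hz' hzz' hqz le_rfl)
  have hjoin := hc.isZJoin_cover_of_isLUB hj
  have hpj : p ≤ c j := hp.2 <|
    mem_upperBounds_pair.2 ⟨(hc.le_cover q).trans hjoin.2.1, hrz'.trans hjoin.1⟩
  refine le_antisymm (hc.cover_le hz hqz) ?_
  exact hzm.le_of_le_zJoin hz' hz hzz'.symm (hc.mem q) (hc.cover_le hz hqz) (hc.mem j) hjoin
    (hzp.trans (hc.cover_le (hc.mem j) hpj))

theorem isGLB_pair_cover_of_le (hc : IsCoverMap Z c) (hdir : ZDirected Z)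
    (hcen : SCentral Z Set.univ) (hpm : PModular Z) {p q : α} (hfin : ZFinite Z p)
    (hqp : q ≤ p) : IsGLB {p, c q} q := by
  obtain ⟨z, hz, hcz, q₁, r, hq₁, hrz, hp⟩ := hcen p trivial (c q) (hc.mem q)
  obtain ⟨s, hs⟩ := hdir q r (zDisjoint_pair (hc.mem q) hz hcz (hc.le_cover q) hrz)
  obtain ⟨hqs, hrs⟩ := mem_upperBounds_pair.1 hs.1
  have hsp : s ≤ p := hs.2 (mem_upperBounds_pair.2 ⟨hqp, hp.1 (by simp)⟩)
  have hps : p = s := hfin s hsp fun w hw hsw => hp.2 <|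
    mem_upperBounds_pair.2 ⟨hq₁.trans (hc.cover_le hw (hqs.trans hsw)), hrs.trans hsw⟩
  subst hps
  exact hpm.isGLB_pair (hc.mem q) hz hcz (hc.le_cover q) hrz hs

end ZCover

theorem stmt16_general {α : Type*} [PartialOrder α] [OrderBot α] (Z : Set α) (c : α → α)
    (hdir : ∀ p q : α, ZDisjoint Z {p, q} → ∃ s, IsLUB {p, q} s)
    (hc : ∀ p, c p ∈ Z ∧ IsGLB {z | z ∈ Z ∧ p ≤ z} (c p))
    (hcen : SCentral Z Set.univ) (hpm : PModular Z) (hzm : ZModular Z)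
    (p : α) (hfin : ∀ q, q ≤ p → (∀ z ∈ Z, q ≤ z → p ≤ z) → p = q) :
    ∃ m : α → α,
      (∀ z, z ∈ Z → z ≤ c p → IsGLB {p, z} (m z) ∧ c (m z) = z) ∧
      (∀ q, q ≤ p → c q ∈ Z ∧ c q ≤ c p ∧ m (c q) = q) ∧
      (∀ q q', q ≤ p → q' ≤ p → (q ≤ q' ↔ c q ≤ c q')) := by
  have hc : IsCoverMap Z c := hc
  have hinf (z : α) (hz : z ∈ Z) : ∃ q, IsGLB {p, z} q := by
    obtain ⟨-, -, -, q, -, -, -, hq⟩ := exists_isGLB_pair_of_sCentral hcen hpm p hz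
    exact ⟨q, hq⟩
  choose! m hm using hinf
  have hmeet (q : α) (hqp : q ≤ p) : IsGLB {p, c q} q :=
    isGLB_pair_cover_of_le hc hdir hcen hpm hfin hqp
  refine ⟨m, fun z hz hzp => ⟨hm z hz, ?_⟩, fun q hqp => ⟨hc.mem q, hc.monotone hqp, ?_⟩,
    fun q q' hq hq' => ⟨fun h => hc.monotone h, fun h => ?_⟩⟩
  · exact cover_eq_of_isGLB_pair hc hdir hcen hpm hzm hz hzp (hm z hz)
  · exact (hm _ (hc.mem q)).unique (hmeet q hqp)
  · exact (hmeet q' hq').2 (mem_lowerBounds_pair.2 ⟨hq, (hc.le_cover q).trans h⟩)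

/-- Let `P` be `Z`-directed and `Z` a `P`-central, `P`-modular, `Z`-modular lower
complete sublattice of `P`, with `Z`-cover map `c`.  If `p` is `≾_Z`-finite then
`q ↦ c q` and `z ↦ p ∧ z` (which exists) are mutually inverse order isomorphisms
between the interval `[0, p]` in `P` and `[0, c p] ∩ Z` with the order from `P`. -/
theorem stmt16 {α : Type*} [PartialOrder α] [OrderBot α] (Z : Set α) (c : α → α)
    (hdir : ∀ p q : α, ZDisjoint Z {p, q} → ∃ s, IsLUB {p, q} s)
    (hZl : ∀ S ⊆ Z, ∃ i, IsGLB S i ∧ i ∈ Z)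
    (hc : ∀ p, c p ∈ Z ∧ IsGLB {z | z ∈ Z ∧ p ≤ z} (c p))
    (hcen : SCentral Z Set.univ) (hpm : PModular Z) (hzm : ZModular Z)
    (p : α) (hfin : ∀ q, q ≤ p → (∀ z ∈ Z, q ≤ z → p ≤ z) → p = q) :
    ∃ m : α → α,
      (∀ z, z ∈ Z → z ≤ c p → IsGLB {p, z} (m z) ∧ c (m z) = z) ∧
      (∀ q, q ≤ p → c q ∈ Z ∧ c q ≤ c p ∧ m (c q) = q) ∧
      (∀ q q', q ≤ p → q' ≤ p → (q ≤ q' ↔ c q ≤ c q')) :=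
  stmt16_general Z c hdir hc hcen hpm hzm p hfin
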